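/- arXiv:1005.3627 — 4 statements merged into one kernel-verified Lean document; each statement's English description precedes it below -/
import Mathlib

section
/- Let sequences a, b, c, d, f of natural numbers be defined by a(0)=1, b(0)=c(0)=d(0)=0, f(n) = 6a(n)+6b(n)+6c(n)+d(n), and the recursions a(n+1) = 5a³+8a²b+6a²c+3ab²+4abc+ac², b(n+1) = 12a³+35a²b+24a²c+30ab²+34abc+4ac²+8b³+12b²c+3bc², c(n+1) = 6a³+26a²b+39a²c+9a²d+30ab²+76abc+12abd+40ac²+6acd+10b³+33b²c+4b²d+30bc²+4bcd+7c³+c²d, d(n+1) = 24a³+126a²b+180a²c+54a²d+198ab²+540abc+144abd+360ac²+180acd+18ad²+92b³+354b²c+84b²d+438bc²+192bcd+18bd²+172c³+102c²d+18cd²+d³ (all arguments on the right are at stage n). Then f(n+1) = f(n)³ − 2(3a(n)+2b(n)+c(n))³ for all n ≥ 0. -/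
/-- One step of the recursion of Lemma 1 of the paper for the numbers of classes
of acyclic orientations on the two-dimensional Sierpinski gasket `SG_2(n)`:
given the quadruple `(a, b, c, d)` at stage `n`, produce the quadruple at
stage `n+1`. -/
def sg2Step : ℕ × ℕ × ℕ × ℕ → ℕ × ℕ × ℕ × ℕ := fun (a, b, c, d) =>
  (5*a^3 + 8*a^2*b + 6*a^2*c + 3*a*b^2 + 4*a*b*c + a*c^2,
   12*a^3 + 35*a^2*b + 24*a^2*c + 30*a*b^2 + 34*a*b*c + 4*a*c^2 + 8*b^3 + 12*b^2*c + 3*b*c^2,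
   6*a^3 + 26*a^2*b + 39*a^2*c + 9*a^2*d + 30*a*b^2 + 76*a*b*c + 12*a*b*d + 40*a*c^2
     + 6*a*c*d + 10*b^3 + 33*b^2*c + 4*b^2*d + 30*b*c^2 + 4*b*c*d + 7*c^3 + c^2*d,
   24*a^3 + 126*a^2*b + 180*a^2*c + 54*a^2*d + 198*a*b^2 + 540*a*b*c + 144*a*b*d
     + 360*a*c^2 + 180*a*c*d + 18*a*d^2 + 92*b^3 + 354*b^2*c + 84*b^2*d + 438*b*c^2
     + 192*b*c*d + 18*b*d^2 + 172*c^3 + 102*c^2*d + 18*c*d^2 + d^3)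

/-- The quadruple `(a_2(n), b_2(n), c_2(n), d_2(n))` with initial values
`(1, 0, 0, 0)` at stage `0`. -/
def sg2Seq (n : ℕ) : ℕ × ℕ × ℕ × ℕ := sg2Step^[n] (1, 0, 0, 0)

def a2 (n : ℕ) : ℕ := (sg2Seq n).1
def b2 (n : ℕ) : ℕ := (sg2Seq n).2.1
def c2 (n : ℕ) : ℕ := (sg2Seq n).2.2.1
def d2 (n : ℕ) : ℕ := (sg2Seq n).2.2.2

/-- The number of acyclic orientations of `SG_2(n)`. -/
def f2 (n : ℕ) : ℕ := 6 * a2 n + 6 * b2 n + 6 * c2 n + d2 n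

/-- `f(n+1) = f(n)^3 - 2*(3a(n) + 2b(n) + c(n))^3` for all `n`. -/
theorem f2_recursion (n : ℕ) :
    (f2 (n + 1) : ℤ) = (f2 n : ℤ) ^ 3 - 2 * (3 * (a2 n : ℤ) + 2 * (b2 n : ℤ) + (c2 n : ℤ)) ^ 3 := by
  have hseq : sg2Seq (n+1) = sg2Step (sg2Seq n) := Function.iterate_succ_apply' _ _ _
  simp only [f2, a2, b2, c2, d2, hseq]
  obtain ⟨a, b, c, d⟩ := sg2Seq n
  simp only [sg2Step]
  push_cast
  ring
end

section
/- For the sequences a, b, c, d defined by the SG_2 recursions with a(0)=1, b(0)=c(0)=d(0)=0, if at stage n we have 0 < a(n) and 0 < b(n) and 0 < c(n), then a(n+1)/b(n+1) < (3/8)·(a(n)/b(n)). Equivalently, 8·a(n+1)·b(n) < 3·a(n)·b(n+1). -/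
/-- if `a(n), b(n), c(n) > 0` then `a(n+1)/b(n+1) < (3/8)·(a(n)/b(n))`,
equivalently `8·a(n+1)·b(n) < 3·a(n)·b(n+1)`. -/
theorem sg2_ratio_ab_decreasing (n : ℕ)
    (ha : 0 < a2 n) (hb : 0 < b2 n) (hc : 0 < c2 n) :
    8 * a2 (n + 1) * b2 n < 3 * a2 n * b2 (n + 1) := by
  have hseq : sg2Seq (n+1) = sg2Step (sg2Seq n) := by
    simp [sg2Seq, Function.iterate_succ_apply']
  rcases hp : sg2Seq n with ⟨a, b, c, d⟩
  have ha' : a2 n = a := by rw [a2, hp]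
  have hb' : b2 n = b := by rw [b2, hp]
  have hc' : c2 n = c := by rw [c2, hp]
  have ha1 : a2 (n+1) = 5*a^3 + 8*a^2*b + 6*a^2*c + 3*a*b^2 + 4*a*b*c + a*c^2 := by
    rw [a2, hseq, hp]; rfl
  have hb1 : b2 (n+1) = 12*a^3 + 35*a^2*b + 24*a^2*c + 30*a*b^2 + 34*a*b*c + 4*a*c^2
      + 8*b^3 + 12*b^2*c + 3*b*c^2 := by
    rw [b2, hseq, hp]; rfl
  rw [ha'] at ha; rw [hb'] at hb; rw [hc'] at hc
  rw [ha', hb', ha1, hb1]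
  nlinarith [pow_pos ha 4, mul_pos (pow_pos ha 3) hb, mul_pos (pow_pos ha 3) hc,
    mul_pos (mul_pos (sq_pos_of_pos ha) hb) hc, Nat.zero_le (a*b^2*c), Nat.zero_le (a*b*c^2)]
end

section
/- For positive reals a, b, c with a < b, the quantities A = 5a³+8a²b+6a²c+3ab²+4abc+ac² and B = 12a³+35a²b+24a²c+30ab²+34abc+4ac²+8b³+12b²c+3bc² satisfy A·b < B·a, i.e. the ratio is strictly decreased: A/B < a/b. -/
/-- for positive reals `a, b, c` with `a < b`, the one-step updates
`A = 5a³+8a²b+6a²c+3ab²+4abc+ac²` and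
`B = 12a³+35a²b+24a²c+30ab²+34abc+4ac²+8b³+12b²c+3bc²`
satisfy `A·b < B·a`, i.e. `A/B < a/b`. -/
theorem sg2_update_ratio_strict (a b c : ℝ) (ha : 0 < a) (hb : 0 < b) (hc : 0 < c)
    (hab : a < b) :
    (5*a^3 + 8*a^2*b + 6*a^2*c + 3*a*b^2 + 4*a*b*c + a*c^2) * b <
      (12*a^3 + 35*a^2*b + 24*a^2*c + 30*a*b^2 + 34*a*b*c + 4*a*c^2
        + 8*b^3 + 12*b^2*c + 3*b*c^2) * a := by
  nlinarith [mul_pos ha hb, mul_pos hb hc, mul_pos ha hc, sq_nonneg (b-a), mul_pos (mul_pos ha ha) ha, mul_pos (mul_pos hb hb) hb]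
end

section
/- For the SG_2 recursions with a(0)=1, b(0)=c(0)=d(0)=0, one has d(n) > 0 for all n ≥ 1, and d(n+1) ≥ d(n)³ for all n ≥ 0; consequently f(n+1) > d(n+1) ≥ d(n)³ and f(n+1) < f(n)³ for n ≥ 1, where f(n)=6a(n)+6b(n)+6c(n)+d(n) and all of a(n),b(n),c(n) are positive for n ≥ 1. -/
lemma sg2Seq_succ (n : ℕ) : sg2Seq (n + 1) = sg2Step (sg2Seq n) := by
  unfold sg2Seq; rw [Function.iterate_succ_apply']

lemma a2_succ (n : ℕ) : a2 (n+1) = 5*a2 n^3 + 8*a2 n^2*b2 n + 6*a2 n^2*c2 n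
    + 3*a2 n*b2 n^2 + 4*a2 n*b2 n*c2 n + a2 n*c2 n^2 := by
  simp only [a2, b2, c2, d2, sg2Seq_succ, sg2Step]

lemma b2_succ (n : ℕ) : b2 (n+1) = 12*a2 n^3 + 35*a2 n^2*b2 n + 24*a2 n^2*c2 n
    + 30*a2 n*b2 n^2 + 34*a2 n*b2 n*c2 n + 4*a2 n*c2 n^2 + 8*b2 n^3
    + 12*b2 n^2*c2 n + 3*b2 n*c2 n^2 := by
  simp only [a2, b2, c2, d2, sg2Seq_succ, sg2Step]

lemma c2_succ (n : ℕ) : c2 (n+1) = 6*a2 n^3 + 26*a2 n^2*b2 n + 39*a2 n^2*c2 n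
    + 9*a2 n^2*d2 n + 30*a2 n*b2 n^2 + 76*a2 n*b2 n*c2 n + 12*a2 n*b2 n*d2 n
    + 40*a2 n*c2 n^2 + 6*a2 n*c2 n*d2 n + 10*b2 n^3 + 33*b2 n^2*c2 n
    + 4*b2 n^2*d2 n + 30*b2 n*c2 n^2 + 4*b2 n*c2 n*d2 n + 7*c2 n^3
    + c2 n^2*d2 n := by
  simp only [a2, b2, c2, d2, sg2Seq_succ, sg2Step]

lemma d2_succ (n : ℕ) : d2 (n+1) = 24*a2 n^3 + 126*a2 n^2*b2 n + 180*a2 n^2*c2 n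
    + 54*a2 n^2*d2 n + 198*a2 n*b2 n^2 + 540*a2 n*b2 n*c2 n + 144*a2 n*b2 n*d2 n
    + 360*a2 n*c2 n^2 + 180*a2 n*c2 n*d2 n + 18*a2 n*d2 n^2 + 92*b2 n^3
    + 354*b2 n^2*c2 n + 84*b2 n^2*d2 n + 438*b2 n*c2 n^2 + 192*b2 n*c2 n*d2 n
    + 18*b2 n*d2 n^2 + 172*c2 n^3 + 102*c2 n^2*d2 n + 18*c2 n*d2 n^2
    + d2 n^3 := by
  simp only [a2, b2, c2, d2, sg2Seq_succ, sg2Step]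

lemma a2_pos : ∀ n, 0 < a2 n := by
  intro n
  induction n with
  | zero => simp [a2, sg2Seq]
  | succ n ih =>
    rw [a2_succ]
    have : 0 < 5 * a2 n ^ 3 := by positivity
    omega

/-- positivity of `a, b, c, d` at stages `n ≥ 1`, the cubic lower
bound `d(n+1) ≥ d(n)³`, and the resulting bounds `f(n+1) > d(n+1) ≥ d(n)³` and
`f(n+1) < f(n)³` for `n ≥ 1`. -/
theorem sg2_bounds :
    (∀ n, 1 ≤ n → 0 < a2 n ∧ 0 < b2 n ∧ 0 < c2 n ∧ 0 < d2 n) ∧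
    (∀ n, d2 n ^ 3 ≤ d2 (n + 1)) ∧
    (∀ n, 1 ≤ n → d2 n ^ 3 ≤ d2 (n + 1) ∧ d2 (n + 1) < f2 (n + 1) ∧ f2 (n + 1) < f2 n ^ 3) := by
  have hpos : ∀ n, 1 ≤ n → 0 < a2 n ∧ 0 < b2 n ∧ 0 < c2 n ∧ 0 < d2 n := by
    rintro (_ | n) h
    · omega
    · have ha := a2_pos n
      refine ⟨a2_pos _, ?_, ?_, ?_⟩
      · rw [b2_succ]; have : 0 < 12 * a2 n ^ 3 := by positivity
        omega
      · rw [c2_succ]; have : 0 < 6 * a2 n ^ 3 := by positivity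
        omega
      · rw [d2_succ]; have : 0 < 24 * a2 n ^ 3 := by positivity
        omega
  have hd : ∀ n, d2 n ^ 3 ≤ d2 (n + 1) := by
    intro n; rw [d2_succ]; omega
  refine ⟨hpos, hd, fun n hn => ⟨hd n, ?_, ?_⟩⟩
  · have h := hpos (n+1) (by omega)
    simp only [f2]; omega
  · obtain ⟨ha, hb, hc, hdp⟩ := hpos n hn
    have key : f2 (n+1) + (54*a2 n^3 + 108*a2 n^2*b2 n + 54*a2 n^2*c2 n
        + 72*a2 n*b2 n^2 + 72*a2 n*b2 n*c2 n + 18*a2 n*c2 n^2 + 16*b2 n^3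
        + 24*b2 n^2*c2 n + 12*b2 n*c2 n^2 + 2*c2 n^3) = f2 n ^ 3 := by
      simp only [f2, a2_succ, b2_succ, c2_succ, d2_succ]; ring
    have : 0 < 54 * a2 n ^ 3 := by positivity
    omega
end
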